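/- arXiv:2602.20699 — 6 statements merged into one kernel-verified Lean document; each statement's English description precedes it below -/
import Mathlib

section
/- Let N ≥ 3, m > 1, σ > max{-2,-N}, p > m. The quadratic dynamical system X' = X(2-(m-1)Y), Y' = -X-(N-2)Y-Z-mY²-((p-m)/(σ+2))XY, Z' = Z(σ+2+(p-m)Y), restricted to the region {X ≥ 0, Z ≥ 0}, has exactly the critical points P₀ = (0,0,0), P₁ = (0,-(N-2)/m,0) and, when p > p_c(σ) = m(N+σ)/(N-2), additionally P₂ = (0, -(σ+2)/(p-m), (N-2)(σ+2)(p-p_c(σ))/(p-m)²); when p ≤ p_c(σ) the only critical points with X ≥ 0, Z ≥ 0 are P₀ and P₁. -/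
/-!
At a critical point with `X > 0` the first equation forces `Y = 2/(m-1) > 0`, and then every
term of the `Y`-equation is negative, so `X = 0`. On `X = 0` the `Z`-equation leaves either
`Z = 0`, where the `Y`-equation reads `Y (N - 2 + mY) = 0` and gives `P₀`, `P₁`, or
`Y = -(σ+2)/(p-m)`, where the `Y`-equation determines `Z`. That `Z` is a positive multiple of
`p - p_c(σ)`, so `P₂` lies in `{Z ≥ 0}` exactly when `p ≥ p_c(σ)`, and for `p = p_c(σ)` it
coincides with `P₁`.
-/

/-- The critical points in `{X ≥ 0, Z ≥ 0}`, with `n = N - 2`, `s = σ + 2`, `k = p - m`. -/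
def criticalSet (n m s k : ℝ) : Set (ℝ × ℝ × ℝ) :=
  {q | 0 ≤ q.1 ∧ 0 ≤ q.2.2 ∧
    q.1 * (2 - (m - 1) * q.2.1) = 0 ∧
    -q.1 - n * q.2.1 - q.2.2 - m * q.2.1 ^ 2 - (k / s) * q.1 * q.2.1 = 0 ∧
    q.2.2 * (s + k * q.2.1) = 0}

section CriticalSet

variable {n m s k : ℝ}

lemma eq_zero_of_critical {c x y z : ℝ} (hn : 0 ≤ n) (hm : 1 < m) (hc : 0 ≤ c)
    (hx : 0 ≤ x) (hz : 0 ≤ z) (hX : x * (2 - (m - 1) * y) = 0)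
    (hY : -x - n * y - z - m * y ^ 2 - c * x * y = 0) : x = 0 := by
  refine hx.eq_or_lt.elim Eq.symm fun hx_pos => absurd hY (ne_of_lt ?_)
  have hy : 0 < y := by
    have : (m - 1) * y = 2 := by linarith [(mul_eq_zero.mp hX).resolve_left hx_pos.ne']
    nlinarith
  nlinarith [mul_nonneg hn hy.le, mul_nonneg (by linarith : (0 : ℝ) ≤ m) (sq_nonneg y),
    mul_nonneg (mul_nonneg hc hx) hy.le]

lemma mem_criticalSet_iff (hn : 0 ≤ n) (hm : 1 < m) (hs : 0 < s) (hk : 0 < k)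
    {x y z : ℝ} :
    (x, y, z) ∈ criticalSet n m s k ↔
      (x, y, z) = (0, 0, 0) ∨ (x, y, z) = (0, -n / m, 0) ∨
        ((x, y, z) = (0, -s / k, s * (n * k - m * s) / k ^ 2) ∧ 0 ≤ n * k - m * s) := by
  have hm0 : m ≠ 0 := by positivity
  have hk0 : k ≠ 0 := hk.ne'
  simp only [criticalSet, Set.mem_ofPred_eq, Prod.mk.injEq]
  constructor
  · rintro ⟨hx, hz, hX, hY, hZ⟩
    obtain rfl : x = 0 := eq_zero_of_critical hn hm (div_nonneg hk.le hs.le) hx hz hX hY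
    rcases mul_eq_zero.mp hZ with rfl | hy
    · have : y * (n + m * y) = 0 := by linear_combination -hY
      rcases mul_eq_zero.mp this with rfl | hy
      · exact .inl ⟨rfl, rfl, rfl⟩
      · exact .inr <| .inl ⟨rfl, by field_simp; linarith, rfl⟩
    · have hy : y = -s / k := by field_simp; linarith
      have hz_eq : z = s * (n * k - m * s) / k ^ 2 := by
        rw [show z = -n * y - m * y ^ 2 by linear_combination -hY, hy]
        field_simp
      subst hy
      refine .inr <| .inr ⟨⟨rfl, rfl, hz_eq⟩, ?_⟩
      rw [hz_eq, le_div_iff₀ (by positivity), zero_mul] at hz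
      exact nonneg_of_mul_nonneg_right hz hs
  · rintro (⟨rfl, rfl, rfl⟩ | ⟨rfl, rfl, rfl⟩ | ⟨⟨rfl, rfl, rfl⟩, hpos⟩)
    · norm_num
    · refine ⟨le_rfl, le_rfl, by ring, ?_, by ring⟩
      field_simp
      ring
    · refine ⟨le_rfl, by positivity, by ring, ?_, ?_⟩
      · field_simp
        ring
      · field_simp
        ring

lemma criticalSet_eq_of_pos (hn : 0 ≤ n) (hm : 1 < m) (hs : 0 < s) (hk : 0 < k)
    (h : 0 < n * k - m * s) :
    criticalSet n m s k =
      {(0, 0, 0), (0, -n / m, 0), (0, -s / k, s * (n * k - m * s) / k ^ 2)} := by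
  ext ⟨x, y, z⟩
  simp only [mem_criticalSet_iff hn hm hs hk, h.le, and_true, Set.mem_insert_iff,
    Set.mem_singleton_iff]

lemma criticalSet_eq_of_nonpos (hn : 0 ≤ n) (hm : 1 < m) (hs : 0 < s) (hk : 0 < k)
    (h : n * k - m * s ≤ 0) :
    criticalSet n m s k = {(0, 0, 0), (0, -n / m, 0)} := by
  ext ⟨x, y, z⟩
  simp only [mem_criticalSet_iff hn hm hs hk, Set.mem_insert_iff, Set.mem_singleton_iff]
  refine ⟨fun h' => h'.imp_right (Or.elim · id fun ⟨hP₂, hpos⟩ => ?_),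
    fun h' => h'.imp_right .inl⟩
  have hzero : n * k - m * s = 0 := le_antisymm h hpos
  rw [hP₂, Prod.mk.injEq, Prod.mk.injEq, hzero]
  refine ⟨rfl, ?_, by simp⟩
  rw [div_eq_div_iff hk.ne' (by positivity)]
  linear_combination hzero

end CriticalSet

/-- For `N ≥ 3`, `m > 1`, `σ > max{-2,-N}`, `p > m`, the critical points of the system
`X' = X(2-(m-1)Y)`, `Y' = -X-(N-2)Y-Z-mY²-((p-m)/(σ+2))XY`, `Z' = Z(σ+2+(p-m)Y)` in the
region `{X ≥ 0, Z ≥ 0}` are exactly `P₀ = (0,0,0)`, `P₁ = (0,-(N-2)/m,0)` and,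
when `p > p_c(σ) = m(N+σ)/(N-2)`, additionally
`P₂ = (0, -(σ+2)/(p-m), (N-2)(σ+2)(p-p_c(σ))/(p-m)²)`; when `p ≤ p_c(σ)` only `P₀`, `P₁`. -/
theorem finite_critical_points (N : ℕ) (hN : 3 ≤ N) (m σ p : ℝ) (hm : 1 < m)
    (hσ : σ > max (-2) (-(N : ℝ))) (hp : p > m) :
    (p > m * ((N : ℝ) + σ) / ((N : ℝ) - 2) →
      {q : ℝ × ℝ × ℝ | 0 ≤ q.1 ∧ 0 ≤ q.2.2 ∧
          q.1 * (2 - (m - 1) * q.2.1) = 0 ∧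
          -q.1 - ((N : ℝ) - 2) * q.2.1 - q.2.2 - m * q.2.1 ^ 2
            - ((p - m) / (σ + 2)) * q.1 * q.2.1 = 0 ∧
          q.2.2 * (σ + 2 + (p - m) * q.2.1) = 0}
        = {(0, 0, 0), (0, -((N : ℝ) - 2) / m, 0),
            (0, -(σ + 2) / (p - m),
              ((N : ℝ) - 2) * (σ + 2) * (p - m * ((N : ℝ) + σ) / ((N : ℝ) - 2))
                / (p - m) ^ 2)}) ∧
    (p ≤ m * ((N : ℝ) + σ) / ((N : ℝ) - 2) →
      {q : ℝ × ℝ × ℝ | 0 ≤ q.1 ∧ 0 ≤ q.2.2 ∧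
          q.1 * (2 - (m - 1) * q.2.1) = 0 ∧
          -q.1 - ((N : ℝ) - 2) * q.2.1 - q.2.2 - m * q.2.1 ^ 2
            - ((p - m) / (σ + 2)) * q.1 * q.2.1 = 0 ∧
          q.2.2 * (σ + 2 + (p - m) * q.2.1) = 0}
        = {(0, 0, 0), (0, -((N : ℝ) - 2) / m, 0)}) := by
  have hn : (0 : ℝ) < N - 2 := by
    have : (3 : ℝ) ≤ N := by exact_mod_cast hN
    linarith
  have hs : 0 < σ + 2 := by linarith [le_max_left (-2 : ℝ) (-(N : ℝ))]
  have hk : 0 < p - m := sub_pos.mpr hp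
  have hP₂ : (N - 2) * (σ + 2) * (p - m * ((N : ℝ) + σ) / (N - 2))
      = (σ + 2) * ((N - 2) * (p - m) - m * (σ + 2)) := by
    field_simp
    ring
  have hpc : p > m * ((N : ℝ) + σ) / (N - 2) ↔ 0 < (N - 2) * (p - m) - m * (σ + 2) := by
    rw [gt_iff_lt, div_lt_iff₀ hn]
    constructor <;> intro h <;> linarith
  refine ⟨fun h => ?_, fun h => ?_⟩
  · rw [hP₂]
    exact criticalSet_eq_of_pos hn.le hm hs hk (hpc.mp h)
  · exact criticalSet_eq_of_nonpos hn.le hm hs hk (not_lt.mp (hpc.not.mp (not_lt.mpr h)))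
end

section
/- Let N ≥ 1, m ≥ 1, σ > -2, p > m. In the invariant plane {Z = 0}, i.e., for the planar system X' = X(2-(m-1)Y), Y' = -X-(N-2)Y-mY²-((p-m)/(σ+2))XY, the line Y = -X/N is an invariant curve (trajectory) of the system if and only if p = p_F(σ) = m + (σ+2)/N. -/
/-!
On the line `Y = -X/N` the terms of the normal component `X'/N + Y'` that are linear in `X`
cancel, and what remains is `X² / N · ((p - m)/(σ + 2) - 1/N)`. It vanishes for all `X > 0`
exactly when the bracket does, i.e. when `p = m + (σ + 2)/N`.
-/

lemma normal_component_on_line_eq (N m σ p X : ℝ) (hN : N ≠ 0) :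
    (1 / N) * (X * (2 - (m - 1) * (-X / N)))
        + (-X - (N - 2) * (-X / N) - m * (-X / N) ^ 2 - ((p - m) / (σ + 2)) * X * (-X / N))
      = X ^ 2 / N * ((p - m) / (σ + 2) - 1 / N) := by
  field_simp
  ring

lemma div_sub_one_div_eq_zero_iff (N m σ p : ℝ) (hN : N ≠ 0) (hσ : σ + 2 ≠ 0) :
    (p - m) / (σ + 2) - 1 / N = 0 ↔ p = m + (σ + 2) / N := by
  rw [sub_eq_zero, div_eq_div_iff hσ hN, ← sub_eq_iff_eq_add', eq_div_iff hN, one_mul]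

theorem line_invariant_iff_fujita_general (N : ℕ) (hN : 1 ≤ N) (m σ p : ℝ)
    (hσ : -2 < σ) :
    (∀ X : ℝ, 0 < X →
        (1 / (N : ℝ)) * (X * (2 - (m - 1) * (-X / (N : ℝ))))
          + (-X - ((N : ℝ) - 2) * (-X / (N : ℝ)) - m * (-X / (N : ℝ)) ^ 2
              - ((p - m) / (σ + 2)) * X * (-X / (N : ℝ))) = 0)
      ↔ p = m + (σ + 2) / (N : ℝ) := by
  have hN0 : (N : ℝ) ≠ 0 := Nat.cast_ne_zero.mpr (by omega)
  have hσ0 : σ + 2 ≠ 0 := by linarith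
  simp only [normal_component_on_line_eq _ _ _ _ _ hN0]
  rw [← div_sub_one_div_eq_zero_iff _ _ _ _ hN0 hσ0]
  constructor
  · intro h
    simpa [hN0] using h 1 one_pos
  · intro h X _
    rw [h, mul_zero]

/-- For `N ≥ 1`, `m ≥ 1`, `σ > -2`, `p > m`, in the invariant plane `{Z = 0}` the line
`Y = -X/N` is an invariant curve of the planar system
`X' = X(2-(m-1)Y)`, `Y' = -X-(N-2)Y-mY²-((p-m)/(σ+2))XY`
(i.e. the vector field is orthogonal to the normal `(1/N, 1)` at every point of the line
with `X > 0`) if and only if `p = p_F(σ) = m + (σ+2)/N`. -/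
theorem line_invariant_iff_fujita (N : ℕ) (hN : 1 ≤ N) (m σ p : ℝ) (hm : 1 ≤ m)
    (hσ : -2 < σ) (hp : p > m) :
    (∀ X : ℝ, 0 < X →
        (1 / (N : ℝ)) * (X * (2 - (m - 1) * (-X / (N : ℝ))))
          + (-X - ((N : ℝ) - 2) * (-X / (N : ℝ)) - m * (-X / (N : ℝ)) ^ 2
              - ((p - m) / (σ + 2)) * X * (-X / (N : ℝ))) = 0)
      ↔ p = m + (σ + 2) / (N : ℝ) :=
  line_invariant_iff_fujita_general N hN m σ p hσ
end

section
/- Let N ≥ 1, m ≥ 1, σ > -2, p > m. For the planar system X' = X(2-(m-1)Y), Y' = -X-(N-2)Y-mY²-((p-m)/(σ+2))XY, the scalar product of the vector field at a point on the line Y = -X/N with the normal vector (1/N, 1) equals F(X) = (p - p_F(σ)) X² / (N(σ+2)), where p_F(σ) = m + (σ+2)/N. In particular this scalar product is strictly positive for X > 0 when p > p_F(σ). -/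
/-- For `N ≥ 1`, `m ≥ 1`, `σ > -2`, `p > m`, the scalar product of the planar vector field
`(X(2-(m-1)Y), -X-(N-2)Y-mY²-((p-m)/(σ+2))XY)` at a point of the line `Y = -X/N` with the
normal vector `(1/N, 1)` equals `(p - p_F(σ)) X² / (N(σ+2))`, with
`p_F(σ) = m + (σ+2)/N`; in particular it is strictly positive for `X > 0` when
`p > p_F(σ)`. -/
theorem flow_across_line (N : ℕ) (hN : 1 ≤ N) (m σ p : ℝ) (hm : 1 ≤ m)
    (hσ : -2 < σ) (hp : p > m) :
    (∀ X : ℝ,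
        (1 / (N : ℝ)) * (X * (2 - (m - 1) * (-X / (N : ℝ))))
          + (-X - ((N : ℝ) - 2) * (-X / (N : ℝ)) - m * (-X / (N : ℝ)) ^ 2
              - ((p - m) / (σ + 2)) * X * (-X / (N : ℝ)))
        = (p - (m + (σ + 2) / (N : ℝ))) * X ^ 2 / ((N : ℝ) * (σ + 2))) ∧
    (p > m + (σ + 2) / (N : ℝ) → ∀ X : ℝ, 0 < X →
        (p - (m + (σ + 2) / (N : ℝ))) * X ^ 2 / ((N : ℝ) * (σ + 2)) > 0) := by
  have hN0 : (N : ℝ) > 0 := by exact_mod_cast Nat.lt_of_lt_of_le Nat.zero_lt_one hN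
  have hσ2 : σ + 2 > 0 := by linarith
  constructor
  · intro X
    field_simp
    ring
  · intro hpF X hX
    apply div_pos
    · have : p - (m + (σ + 2) / (N : ℝ)) > 0 := by linarith
      positivity
    · positivity
end

section
/- Let N ≥ 3, m > 1, σ > max{-2,-N}, and p = p_S(σ) = m(N+2σ+2)/(N-2). Then the curve Z = -((N+σ)/(N-2))(mY + N - 2)Y in the plane {X = 0} is invariant for the system X' = X(2-(m-1)Y), Y' = -X-(N-2)Y-Z-mY²-((p-m)/(σ+2))XY, Z' = Z(σ+2+(p-m)Y); that is, along the restricted planar system Y' = -(N-2)Y - Z - mY², Z' = Z(σ+2+(p-m)Y), the quantity G(Y,Z) = Z + ((N+σ)/(N-2))(mY + N - 2)Y has derivative zero whenever G(Y,Z) = 0. -/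
/-- For `N ≥ 3`, `m > 1`, `σ > max{-2,-N}` and `p = p_S(σ) = m(N+2σ+2)/(N-2)`, the curve
`Z = -((N+σ)/(N-2))(mY+N-2)Y` in the invariant plane `{X = 0}` is invariant for the
system: along the restricted planar system `Y' = -(N-2)Y - Z - mY²`,
`Z' = Z(σ+2+(p-m)Y)`, the quantity `G(Y,Z) = Z + ((N+σ)/(N-2))(mY+N-2)Y` has derivative
`∇G · (Y', Z') = 0` whenever `G(Y,Z) = 0`. -/
theorem explicit_curve_invariant (N : ℕ) (hN : 3 ≤ N) (m σ p : ℝ) (hm : 1 < m)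
    (hσ : σ > max (-2) (-(N : ℝ))) (hp : p = m * ((N : ℝ) + 2 * σ + 2) / ((N : ℝ) - 2)) :
    ∀ Y Z : ℝ,
      Z + (((N : ℝ) + σ) / ((N : ℝ) - 2)) * (m * Y + (N : ℝ) - 2) * Y = 0 →
      (((N : ℝ) + σ) / ((N : ℝ) - 2)) * (2 * m * Y + (N : ℝ) - 2)
          * (-((N : ℝ) - 2) * Y - Z - m * Y ^ 2)
        + Z * (σ + 2 + (p - m) * Y) = 0 := by
  intro Y Z hG
  have hN2 : ((N : ℝ) - 2) ≠ 0 := by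
    have : (3 : ℝ) ≤ (N : ℝ) := by exact_mod_cast hN
    nlinarith
  have hZ : Z = -(((N : ℝ) + σ) / ((N : ℝ) - 2)) * (m * Y + (N : ℝ) - 2) * Y := by
    linarith
  subst hp hZ
  field_simp
  ring
end

section
/- Let N ≥ 3, m > 1, σ > max{-2,-N}, and p = p_S(σ) = m(N+2σ+2)/(N-2). For the 3D system X' = X(2-(m-1)Y), Y' = -X-(N-2)Y-Z-mY²-((p-m)/(σ+2))XY, Z' = Z(σ+2+(p-m)Y), the scalar product of the vector field with the normal n(X,Y,Z) = (0, ((N+σ)/(N-2))(2mY+N-2), 1) on the cylindrical surface Z = -((N+σ)/(N-2))(mY+N-2)Y equals E = -(N+σ) X (1 + (2m/(N-2)) Y)², which is ≤ 0, and strictly negative whenever X > 0 and Y ≠ -(N-2)/(2m). -/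
/-- For `N ≥ 3`, `m > 1`, `σ > max{-2,-N}` and `p = p_S(σ) = m(N+2σ+2)/(N-2)`, on the
cylindrical surface `Z = -((N+σ)/(N-2))(mY+N-2)Y` the scalar product of the vector field
of the 3D system with the normal `n = (0, ((N+σ)/(N-2))(2mY+N-2), 1)` equals
`E = -(N+σ) X (1 + (2m/(N-2)) Y)²`; this quantity is `≤ 0` for `X ≥ 0` and strictly
negative when `X > 0` and `Y ≠ -(N-2)/(2m)`. -/
theorem flow_on_cylinder (N : ℕ) (hN : 3 ≤ N) (m σ p : ℝ) (hm : 1 < m)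
    (hσ : σ > max (-2) (-(N : ℝ))) (hp : p = m * ((N : ℝ) + 2 * σ + 2) / ((N : ℝ) - 2)) :
    ∀ X Y : ℝ,
      (let Z := -(((N : ℝ) + σ) / ((N : ℝ) - 2)) * (m * Y + (N : ℝ) - 2) * Y
       (((N : ℝ) + σ) / ((N : ℝ) - 2)) * (2 * m * Y + (N : ℝ) - 2)
            * (-X - ((N : ℝ) - 2) * Y - Z - m * Y ^ 2 - ((p - m) / (σ + 2)) * X * Y)
          + Z * (σ + 2 + (p - m) * Y)
        = -((N : ℝ) + σ) * X * (1 + (2 * m / ((N : ℝ) - 2)) * Y) ^ 2) ∧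
      (0 ≤ X → -((N : ℝ) + σ) * X * (1 + (2 * m / ((N : ℝ) - 2)) * Y) ^ 2 ≤ 0) ∧
      (0 < X → Y ≠ -((N : ℝ) - 2) / (2 * m) →
        -((N : ℝ) + σ) * X * (1 + (2 * m / ((N : ℝ) - 2)) * Y) ^ 2 < 0) := by
  intro X Y
  have hN2 : (0:ℝ) < (N:ℝ) - 2 := by
    have : (3:ℝ) ≤ (N:ℝ) := by exact_mod_cast hN
    linarith
  have hσ2 : (0:ℝ) < σ + 2 := by
    have := lt_of_le_of_lt (le_max_left (-2) (-(N:ℝ))) hσ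
    linarith
  have hNσ : (0:ℝ) < (N:ℝ) + σ := by
    have := lt_of_le_of_lt (le_max_right (-2) (-(N:ℝ))) hσ
    linarith
  refine ⟨?_, ?_, ?_⟩
  · subst hp
    field_simp
    ring
  · intro hX
    have h1 : (0:ℝ) ≤ (N:ℝ) + σ := hNσ.le
    nlinarith [sq_nonneg (1 + (2 * m / ((N : ℝ) - 2)) * Y), mul_nonneg hX (sq_nonneg (1 + (2 * m / ((N : ℝ) - 2)) * Y))]
  · intro hX hY
    have hne : 1 + (2 * m / ((N : ℝ) - 2)) * Y ≠ 0 := by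
      intro h
      apply hY
      have hm0 : (2:ℝ) * m ≠ 0 := by positivity
      field_simp at h ⊢
      linarith
    have hsq : 0 < (1 + (2 * m / ((N : ℝ) - 2)) * Y) ^ 2 := by positivity
    nlinarith [mul_pos hX hsq]
end

section
/- Let N ≥ 1, m > 1, σ > -2, p > m. Suppose f: (0,∞) → (0,∞) is a C² solution of the profile ODE (f^m)'' + ((N-1)/ξ)(f^m)' + αf + βξf' + ξ^σ f^p = 0 with α = (σ+2)/(σ(m-1)+2(p-1)), β = (p-m)/(σ(m-1)+2(p-1)). Define X(ξ) = (α/m)ξ² f(ξ)^{1-m}, Y(ξ) = ξ f'(ξ)/f(ξ), Z(ξ) = (1/m)ξ^{σ+2} f(ξ)^{p-m}, and let η = log ξ. Then (X,Y,Z) as functions of η satisfy dX/dη = X(2-(m-1)Y), dY/dη = -X-(N-2)Y-Z-mY²-((p-m)/(σ+2))XY, dZ/dη = Z(σ+2+(p-m)Y). -/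
/-!
In the logarithmic variable `η = log ξ` one has `d/dη = ξ d/dξ`. The variables `X` and `Z` are
monomials `c ξ^a f^b`, whose logarithmic derivative is `a + b Y`; this gives the `X` and `Z`
equations. For `Y = ξ f'/f` one finds `dY/dη = Y - Y² + ξ² f''/f`, and the profile ODE,
multiplied by `ξ² / (m f^m)`, expresses `ξ² f''/f` as a quadratic polynomial in `X, Y, Z`; the
relation `β (σ + 2) = α (p - m)` between the self-similar exponents turns the drift term
`β ξ f'` into `((p - m)/(σ + 2)) X Y`.
-/

open Real Set Topology

lemma hasDerivAt_comp_exp {g : ℝ → ℝ} {g' η : ℝ} (hg : HasDerivAt g g' (exp η)) :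
    HasDerivAt (fun t => g (exp t)) (exp η * g') η :=
  (hg.comp η (hasDerivAt_exp η)).congr_deriv (mul_comm _ _)

section

variable {f : ℝ → ℝ}

lemma hasDerivAt_monomial_comp_exp (c a b : ℝ) {f' η : ℝ} (hf : HasDerivAt f f' (exp η))
    (hfpos : 0 < f (exp η)) :
    HasDerivAt (fun t => c * exp t ^ a * f (exp t) ^ b)
      (c * exp η ^ a * f (exp η) ^ b * (a + b * (exp η * f' / f (exp η)))) η := by
  have hmono := ((hasDerivAt_rpow_const (p := a) (Or.inl (exp_pos η).ne')).const_mul c).mul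
    (hf.rpow_const (p := b) (Or.inl hfpos.ne'))
  refine (hasDerivAt_comp_exp hmono).congr_deriv ?_
  rw [rpow_sub_one (exp_pos η).ne', rpow_sub_one hfpos.ne']
  field_simp

lemma hasDerivAt_mul_div_comp_exp {g : ℝ → ℝ} {g' η : ℝ} (hf : HasDerivAt f (g (exp η)) (exp η))
    (hg : HasDerivAt g g' (exp η)) (hfpos : f (exp η) ≠ 0) :
    HasDerivAt (fun t => exp t * g (exp t) / f (exp t))
      (exp η * g (exp η) / f (exp η) - (exp η * g (exp η) / f (exp η)) ^ 2
        + exp η ^ 2 * g' / f (exp η)) η := by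
  refine (hasDerivAt_comp_exp (((hasDerivAt_id' _).mul hg).div hf hfpos)).congr_deriv ?_
  simp only [Pi.mul_apply]
  field_simp
  ring

lemma ContDiffOn.hasDerivAt_deriv_deriv {s : Set ℝ} (hf : ContDiffOn ℝ 2 f s) (hs : IsOpen s)
    {x : ℝ} (hx : x ∈ s) : HasDerivAt (deriv f) (deriv (deriv f) x) x :=
  (((hf.deriv_of_isOpen hs (m := 1) (by norm_num)).differentiableOn one_ne_zero).differentiableAt
    (hs.mem_nhds hx)).hasDerivAt

lemma hasDerivAt_deriv_rpow {s : Set ℝ} (hs : IsOpen s) (hf : DifferentiableOn ℝ f s)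
    (hpos : ∀ x ∈ s, 0 < f x) {x f'' : ℝ} (hx : x ∈ s) (hf' : HasDerivAt (deriv f) f'' x) (m : ℝ) :
    HasDerivAt (deriv fun y => f y ^ m)
      ((f'' + (m - 1) * deriv f x ^ 2 / f x) * m * f x ^ (m - 1)) x := by
  have hderiv : deriv (fun y => f y ^ m) =ᶠ[𝓝 x] fun y => deriv f y * m * f y ^ (m - 1) := by
    filter_upwards [hs.mem_nhds hx] with y hy
    exact ((hf.differentiableAt (hs.mem_nhds hy)).hasDerivAt.rpow_const
      (Or.inl (hpos y hy).ne')).deriv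
  have hfx := (hf.differentiableAt (hs.mem_nhds hx)).hasDerivAt
  refine ((hf'.mul_const m).mul (hfx.rpow_const (p := m - 1) (Or.inl (hpos x hx).ne'))
    |>.congr_of_eventuallyEq hderiv).congr_deriv ?_
  rw [rpow_sub_one (hpos x hx).ne' (m - 1)]
  generalize f x ^ (m - 1) = A
  ring

end

/-- The profile ODE at a point `ξ`, with `F, F₁, F₂` standing for `f ξ, f' ξ, f'' ξ` and
`(f^m)', (f^m)''` expanded. -/
lemma profile_ode_phase_variables {N m σ p α β k ξ F F₁ F₂ : ℝ} (hm : m ≠ 0) (hξ : 0 < ξ)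
    (hF : 0 < F) (hβ : β = α * k)
    (hode : (F₂ + (m - 1) * F₁ ^ 2 / F) * m * F ^ (m - 1) + (N - 1) / ξ * (F₁ * m * F ^ (m - 1))
      + α * F + β * ξ * F₁ + ξ ^ σ * F ^ p = 0) :
    ξ ^ 2 * F₂ / F = -(α / m * ξ ^ 2 * F ^ (1 - m)) - (N - 1) * (ξ * F₁ / F)
      - 1 / m * ξ ^ (σ + 2) * F ^ (p - m) - (m - 1) * (ξ * F₁ / F) ^ 2
      - k * (α / m * ξ ^ 2 * F ^ (1 - m)) * (ξ * F₁ / F) := by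
  have hpow : F ^ p = F ^ (m - 1) * F ^ (p - m) * F := by
    rw [← rpow_add hF, ← rpow_add_one hF.ne']; ring_nf
  have hinv : F ^ (1 - m) = (F ^ (m - 1))⁻¹ := by
    rw [← rpow_neg hF.le]; ring_nf
  have hξpow : ξ ^ (σ + 2) = ξ ^ σ * ξ ^ 2 := by
    rw [rpow_add hξ, rpow_two]
  have ha : F ^ (m - 1) ≠ 0 := (rpow_pos_of_pos hF _).ne'
  rw [hpow, hβ] at hode
  rw [hinv, hξpow]
  field_simp at hode ⊢
  linear_combination hode

theorem phase_space_change_of_variables_general (N : ℕ) (m σ p α β : ℝ)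
    (hm : 1 < m) (hσ : -2 < σ)
    (hα : α = (σ + 2) / (σ * (m - 1) + 2 * (p - 1)))
    (hβ : β = (p - m) / (σ * (m - 1) + 2 * (p - 1)))
    (f : ℝ → ℝ) (hreg : ContDiffOn ℝ 2 f (Ioi 0)) (hpos : ∀ ξ ∈ Ioi (0 : ℝ), 0 < f ξ)
    (hode : ∀ ξ ∈ Ioi (0 : ℝ),
      deriv (deriv (fun s => f s ^ m)) ξ + (((N : ℝ) - 1) / ξ) * deriv (fun s => f s ^ m) ξ
        + α * f ξ + β * ξ * deriv f ξ + ξ ^ σ * f ξ ^ p = 0)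
    (X Y Z : ℝ → ℝ)
    (hX : X = fun ξ => (α / m) * ξ ^ 2 * f ξ ^ (1 - m))
    (hY : Y = fun ξ => ξ * deriv f ξ / f ξ)
    (hZ : Z = fun ξ => (1 / m) * ξ ^ (σ + 2) * f ξ ^ (p - m)) :
    ∀ η : ℝ,
      HasDerivAt (fun t => X (Real.exp t))
        (X (Real.exp η) * (2 - (m - 1) * Y (Real.exp η))) η ∧
      HasDerivAt (fun t => Y (Real.exp t))
        (-X (Real.exp η) - ((N : ℝ) - 2) * Y (Real.exp η) - Z (Real.exp η)
          - m * Y (Real.exp η) ^ 2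
          - ((p - m) / (σ + 2)) * X (Real.exp η) * Y (Real.exp η)) η ∧
      HasDerivAt (fun t => Z (Real.exp t))
        (Z (Real.exp η) * (σ + 2 + (p - m) * Y (Real.exp η))) η := by
  intro η
  subst hX hY hZ
  have hξ : exp η ∈ Ioi (0 : ℝ) := exp_pos η
  have hdiff : DifferentiableOn ℝ f (Ioi 0) := hreg.differentiableOn two_ne_zero
  have hf : HasDerivAt f (deriv f (exp η)) (exp η) :=
    (hdiff.differentiableAt (isOpen_Ioi.mem_nhds hξ)).hasDerivAt
  have hf' := hreg.hasDerivAt_deriv_deriv isOpen_Ioi hξ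
  have hβα : β = α * ((p - m) / (σ + 2)) := by
    rw [hα, hβ]; field_simp [show σ + 2 ≠ 0 by linarith]
  have hode' := hode _ hξ
  rw [(hasDerivAt_deriv_rpow isOpen_Ioi hdiff hpos hξ hf' m).deriv,
    (hf.rpow_const (p := m) (Or.inl (hpos _ hξ).ne')).deriv] at hode'
  have hf'' := profile_ode_phase_variables (zero_lt_one.trans hm).ne' hξ (hpos _ hξ) hβα hode'
  refine ⟨?_, ?_, ?_⟩
  · have hX := hasDerivAt_monomial_comp_exp (α / m) 2 (1 - m) hf (hpos _ hξ)
    simp only [rpow_two] at hX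
    exact hX.congr_deriv (by ring)
  · refine (hasDerivAt_mul_div_comp_exp hf hf' (hpos _ hξ).ne').congr_deriv ?_
    rw [hf'']
    ring
  · exact hasDerivAt_monomial_comp_exp (1 / m) (σ + 2) (p - m) hf (hpos _ hξ)

/-- For `N ≥ 1`, `m > 1`, `σ > -2`, `p > m`, if `f : (0,∞) → (0,∞)` is a positive `C²`
solution of the profile ODE `(f^m)'' + ((N-1)/ξ)(f^m)' + αf + βξf' + ξ^σ f^p = 0` with
the self-similar exponents `α, β`, then the functions
`X(ξ) = (α/m)ξ² f(ξ)^{1-m}`, `Y(ξ) = ξ f'(ξ)/f(ξ)`, `Z(ξ) = (1/m)ξ^{σ+2} f(ξ)^{p-m}`,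
regarded as functions of `η = log ξ`, solve the autonomous quadratic system
`X' = X(2-(m-1)Y)`, `Y' = -X-(N-2)Y-Z-mY²-((p-m)/(σ+2))XY`, `Z' = Z(σ+2+(p-m)Y)`. -/
theorem phase_space_change_of_variables (N : ℕ) (hN : 1 ≤ N) (m σ p α β : ℝ)
    (hm : 1 < m) (hσ : -2 < σ) (hp : p > m)
    (hα : α = (σ + 2) / (σ * (m - 1) + 2 * (p - 1)))
    (hβ : β = (p - m) / (σ * (m - 1) + 2 * (p - 1)))
    (f : ℝ → ℝ) (hreg : ContDiffOn ℝ 2 f (Ioi 0)) (hpos : ∀ ξ ∈ Ioi (0 : ℝ), 0 < f ξ)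
    (hode : ∀ ξ ∈ Ioi (0 : ℝ),
      deriv (deriv (fun s => f s ^ m)) ξ + (((N : ℝ) - 1) / ξ) * deriv (fun s => f s ^ m) ξ
        + α * f ξ + β * ξ * deriv f ξ + ξ ^ σ * f ξ ^ p = 0)
    (X Y Z : ℝ → ℝ)
    (hX : X = fun ξ => (α / m) * ξ ^ 2 * f ξ ^ (1 - m))
    (hY : Y = fun ξ => ξ * deriv f ξ / f ξ)
    (hZ : Z = fun ξ => (1 / m) * ξ ^ (σ + 2) * f ξ ^ (p - m)) :
    ∀ η : ℝ,
      HasDerivAt (fun t => X (Real.exp t))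
        (X (Real.exp η) * (2 - (m - 1) * Y (Real.exp η))) η ∧
      HasDerivAt (fun t => Y (Real.exp t))
        (-X (Real.exp η) - ((N : ℝ) - 2) * Y (Real.exp η) - Z (Real.exp η)
          - m * Y (Real.exp η) ^ 2
          - ((p - m) / (σ + 2)) * X (Real.exp η) * Y (Real.exp η)) η ∧
      HasDerivAt (fun t => Z (Real.exp t))
        (Z (Real.exp η) * (σ + 2 + (p - m) * Y (Real.exp η))) η :=
  phase_space_change_of_variables_general N m σ p α β hm hσ hα hβ f hreg hpos hode X Y Z hX hY hZ
end
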